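/- arXiv:1206.0984 — 2 statements merged into one kernel-verified Lean document; each statement's English description precedes it below -/
import Mathlib

section
/- Let H be a Hilbert space and d : D(d) ⊆ H → H a closed densely defined operator with d ∘ d = 0 (where composable). If the cohomology ker(d)/range(d) is finite-dimensional, then range(d) is closed in H. -/
open LinearPMap

/-- Auxiliary: if `T` is a continuous linear map from a Banach space into `H`, its range is
contained in a closed subspace `K`, and `K ≤ range T ⊔ W` with `W` finite dimensional, then
the range of `T` is closed. -/
lemma aux_closed_range {X H : Type*} [NormedAddCommGroup X] [NormedSpace ℝ X] [CompleteSpace X]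
    [NormedAddCommGroup H] [NormedSpace ℝ H] [CompleteSpace H]
    (T : X →L[ℝ] H) (K W : Submodule ℝ H) (hKc : IsClosed (K : Set H))
    [FiniteDimensional ℝ W]
    (hRK : LinearMap.range (T : X →ₗ[ℝ] H) ≤ K) (hWK : W ≤ K)
    (hKRW : K ≤ LinearMap.range (T : X →ₗ[ℝ] H) ⊔ W) :
    IsClosed ((LinearMap.range (T : X →ₗ[ℝ] H) : Submodule ℝ H) : Set H) := by
  haveI : CompleteSpace K := hKc.completeSpace_coe
  -- the map `S : X × W → K`, `(x, w) ↦ T x + w`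
  have hmem : ∀ p : X × W, T p.1 + (p.2 : H) ∈ K := fun p =>
    K.add_mem (hRK ⟨p.1, rfl⟩) (hWK p.2.2)
  set S : X × W →L[ℝ] H :=
    T.comp (ContinuousLinearMap.fst ℝ X W) + W.subtypeL.comp (ContinuousLinearMap.snd ℝ X W)
    with hS
  have hSapp : ∀ p : X × W, S p = T p.1 + (p.2 : H) := fun p => rfl
  set S' : X × W →L[ℝ] K := S.codRestrict K (fun p => hmem p) with hS'
  have hsurj : Function.Surjective S' := by
    rintro ⟨k, hk⟩
    rcases Submodule.mem_sup.mp (hKRW hk) with ⟨r, hr, w, hw, hrw⟩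
    rcases hr with ⟨x, rfl⟩
    exact ⟨(x, ⟨w, hw⟩), Subtype.ext ((hSapp (x, ⟨w, hw⟩)).trans hrw)⟩
  have hopen : IsOpenMap S' := S'.isOpenMap hsurj
  -- `A` is the range of `T` viewed inside `K`
  set A : Set K := Subtype.val ⁻¹' ((LinearMap.range (T : X →ₗ[ℝ] H) : Submodule ℝ H) : Set H) with hA
  -- preimage of `A` under `S'` is `univ ×ˢ B`, closed
  have hpre : S' ⁻¹' A =
      Set.univ ×ˢ (((LinearMap.range (T : X →ₗ[ℝ] H)).comap W.subtype : Submodule ℝ W) : Set W) := by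
    ext ⟨x, w⟩
    simp only [Set.mem_preimage, hA, Set.mem_prod, Set.mem_univ, true_and, SetLike.mem_coe,
      Submodule.mem_comap, Submodule.coe_subtype]
    constructor
    · intro h
      have : T x + (w : H) ∈ LinearMap.range (T : X →ₗ[ℝ] H) := h
      have h2 : (w : H) ∈ LinearMap.range (T : X →ₗ[ℝ] H) := by
        have := Submodule.sub_mem _ this ⟨x, rfl⟩
        simpa using this
      exact h2
    · intro h
      show T x + (w : H) ∈ LinearMap.range (T : X →ₗ[ℝ] H)
      exact Submodule.add_mem _ ⟨x, rfl⟩ h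
  have hpreclosed : IsClosed (S' ⁻¹' A) := by
    rw [hpre]
    exact isClosed_univ.prod (Submodule.closed_of_finiteDimensional _)
  -- `Aᶜ` is open as the image of the open saturated set `(S' ⁻¹' A)ᶜ`
  have himg : S' '' (S' ⁻¹' A)ᶜ = Aᶜ := by
    rw [← Set.preimage_compl, Set.image_preimage_eq _ hsurj]
  have hAclosed : IsClosed A := by
    rw [← isOpen_compl_iff, ← himg]
    exact hopen _ hpreclosed.isOpen_compl
  -- push back to `H`
  have : ((LinearMap.range (T : X →ₗ[ℝ] H) : Submodule ℝ H) : Set H) = Subtype.val '' A := by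
    rw [hA, Set.image_preimage_eq_inter_range, Subtype.range_coe]
    exact (Set.inter_eq_left.mpr hRK).symm
  rw [this]
  exact hKc.isClosedEmbedding_subtypeVal.isClosedMap _ hAclosed

/-- Brüning–Lesch: Let `d` be a closed densely defined operator on a Hilbert
space `H` with `range d ⊆ ker d` (i.e. `d ∘ d = 0` where composable).  If the cohomology
`ker d / range d` is finite dimensional, then `range d` is closed in `H`. -/
theorem stmt9 {H : Type*} [NormedAddCommGroup H] [InnerProductSpace ℝ H] [CompleteSpace H]
    (d : H →ₗ.[ℝ] H) (hclosed : d.IsClosed) (hdense : Dense (d.domain : Set H))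
    -- the kernel of `d`, as a submodule of `H`
    (K : Submodule ℝ H) (hK : K = (LinearMap.ker d.toFun).map d.domain.subtype)
    -- `d ∘ d = 0`: the range of `d` is contained in the kernel
    (hdd : LinearMap.range d.toFun ≤ K)
    -- the cohomology `ker d / range d` is finite dimensional
    (hfin : FiniteDimensional ℝ
      (K ⧸ (LinearMap.range d.toFun).comap K.subtype)) :
    IsClosed ((LinearMap.range d.toFun : Submodule ℝ H) : Set H) := by
  -- the graph of `d` is a closed subspace, hence a Banach space
  haveI : CompleteSpace d.graph := hclosed.completeSpace_coe
  -- `T : graph → H`, `(x, y) ↦ y`; its range is the range of `d`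
  set T : d.graph →L[ℝ] H :=
    (ContinuousLinearMap.snd ℝ H H).comp d.graph.subtypeL with hT
  have hrange : LinearMap.range (T : d.graph →ₗ[ℝ] H) = LinearMap.range d.toFun := by
    ext y
    constructor
    · rintro ⟨⟨⟨a, b⟩, hab⟩, rfl⟩
      rcases (d.mem_graph_iff).mp hab with ⟨x, hx1, hx2⟩
      exact ⟨x, hx2⟩
    · rintro ⟨x, rfl⟩
      exact ⟨⟨((x : H), d.toFun x), d.mem_graph x⟩, rfl⟩
  -- `K` is closed: it is the preimage of the graph under `x ↦ (x, 0)`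
  have hKc : IsClosed (K : Set H) := by
    have hKeq : (K : Set H) = (fun x : H => ((x, (0 : H)) : H × H)) ⁻¹' (d.graph : Set (H × H)) := by
      ext x
      simp only [Set.mem_preimage, SetLike.mem_coe, hK, Submodule.mem_map, LinearMap.mem_ker,
        Submodule.coe_subtype, d.mem_graph_iff]
      constructor
      · rintro ⟨a, ha, rfl⟩; exact ⟨a, rfl, ha⟩
      · rintro ⟨a, ha, h0⟩; exact ⟨a, h0, ha⟩
    rw [hKeq]
    exact hclosed.preimage (by continuity)
  -- choose a finite dimensional complement `W` of the range inside `K`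
  set R' : Submodule ℝ K := (LinearMap.range d.toFun).comap K.subtype with hR'
  obtain ⟨W', hW'⟩ := R'.exists_isCompl
  haveI : FiniteDimensional ℝ W' :=
    LinearEquiv.finiteDimensional (Submodule.quotientEquivOfIsCompl R' W' hW')
  set W : Submodule ℝ H := W'.map K.subtype with hW
  haveI : FiniteDimensional ℝ W := Module.Finite.map _ _
  have hWK : W ≤ K := by
    rintro x ⟨a, _, rfl⟩; exact a.2
  have hKRW : K ≤ LinearMap.range (T : d.graph →ₗ[ℝ] H) ⊔ W := by
    intro x hx
    have : (⟨x, hx⟩ : K) ∈ R' ⊔ W' := by rw [hW'.sup_eq_top]; trivial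
    rcases Submodule.mem_sup.mp this with ⟨r, hr, w, hw, hrw⟩
    refine Submodule.mem_sup.mpr ⟨(r : H), ?_, (w : H), ⟨w, hw, rfl⟩, ?_⟩
    · rw [hrange]; exact hr
    · exact congrArg Subtype.val hrw
  have := aux_closed_range T K W hKc (by rw [← hrange] at hdd; exact hdd.trans_eq rfl) hWK hKRW
  rwa [hrange] at this
end

section
/- Let H be a Hilbert space, d a closed densely defined operator on H with d² = 0 and range(d) closed, and suppose ker(d)/range(d) is finite-dimensional. Then the operator D = d + d* (with domain D(d) ∩ D(d*)) has finite-dimensional kernel ker(d) ∩ ker(d*) isomorphic to ker(d)/range(d), and D is Fredholm as an unbounded operator. -/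
/-!
If `d² = 0` and `range d` is closed, `H` splits orthogonally as
`(ker d)ᗮ ⊕ range d ⊕ (ker d ⊓ (range d)ᗮ)`, and `(range d)ᗮ = ker d†`. The last summand is the
harmonic space `ker d ⊓ ker d†`, a complement of `range d` in `ker d`, hence isomorphic to the
cohomology. On `(ker d)ᗮ ∩ dom d` the operator `D` acts as `d`, on `range d ∩ dom d†` as `d†`;
by the closed range theorem `(ker d)ᗮ ⊆ range d†`, so `range D` contains the first two summands,
which form the orthogonal complement of the finite-dimensional harmonic space `ker D`.
-/

open LinearPMap
open scoped InnerProductSpace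

theorem LinearMap.exists_comp_rangeRestrict_eq {R M N P : Type*} [Ring R] [AddCommGroup M]
    [AddCommGroup N] [AddCommGroup P] [Module R M] [Module R N] [Module R P]
    {f : M →ₗ[R] N} {g : M →ₗ[R] P} (h : LinearMap.ker f ≤ LinearMap.ker g) :
    ∃ ℓ : LinearMap.range f →ₗ[R] P, ∀ x, ℓ (f.rangeRestrict x) = g x :=
  ⟨(LinearMap.ker f).liftQ g h ∘ₗ f.quotKerEquivRange.symm, fun x => by
    change (LinearMap.ker f).liftQ g h (f.quotKerEquivRange.symm ⟨f x, _⟩) = g x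
    rw [LinearMap.quotKerEquivRange_symm_apply_image]
    rfl⟩

theorem Submodule.inf_orthogonal_inf_orthogonal_of_le {𝕜 E : Type*} [RCLike 𝕜]
    [NormedAddCommGroup E] [InnerProductSpace 𝕜 E] {R K : Submodule 𝕜 E} (h : R ≤ K)
    [R.HasOrthogonalProjection] : K ⊓ (K ⊓ Rᗮ)ᗮ = R := by
  refine le_antisymm ?_ fun r hr =>
    ⟨h hr, fun u hu => Submodule.inner_left_of_mem_orthogonal hr hu.2⟩
  intro k hk
  obtain ⟨hkK, hk⟩ := Submodule.mem_inf.1 hk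
  rw [← sup_orthogonal_inf_of_hasOrthogonalProjection h, Submodule.mem_sup] at hkK
  obtain ⟨r, hr, u, hu, rfl⟩ := hkK
  have hu0 : ⟪u, u⟫_𝕜 = 0 := by
    have h1 : ⟪u, r + u⟫_𝕜 = 0 :=
      Submodule.inner_right_of_mem_orthogonal (K := K ⊓ Rᗮ) ⟨hu.2, hu.1⟩ hk
    rwa [inner_add_right, Submodule.inner_left_of_mem_orthogonal hr hu.1, zero_add] at h1
  rwa [inner_self_eq_zero.1 hu0, add_zero]

noncomputable def Submodule.infOrthogonalEquivQuotient {𝕜 E : Type*} [RCLike 𝕜]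
    [NormedAddCommGroup E] [InnerProductSpace 𝕜 E] {R K : Submodule 𝕜 E} (h : R ≤ K)
    [R.HasOrthogonalProjection] : ↥(K ⊓ Rᗮ) ≃ₗ[𝕜] K ⧸ R.comap K.subtype :=
  LinearEquiv.ofBijective ((R.comap K.subtype).mkQ ∘ₗ Submodule.inclusion inf_le_left) <| by
    refine ⟨?_, ?_⟩
    · rw [← LinearMap.ker_eq_bot, LinearMap.ker_eq_bot']
      intro x hx
      have hxR : (x : E) ∈ R ⊓ Rᗮ :=
        ⟨(Submodule.Quotient.mk_eq_zero (R.comap K.subtype)).1 hx, x.2.2⟩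
      rw [Submodule.inf_orthogonal_eq_bot] at hxR
      exact Subtype.ext hxR
    · intro q
      obtain ⟨⟨k, hk⟩, rfl⟩ := Submodule.mkQ_surjective _ q
      rw [← sup_orthogonal_inf_of_hasOrthogonalProjection h, Submodule.mem_sup] at hk
      obtain ⟨r, hr, u, hu, rfl⟩ := hk
      refine ⟨⟨u, hu.2, hu.1⟩, (Submodule.Quotient.eq _).2 ?_⟩
      simpa [Submodule.mem_comap] using R.neg_mem hr

namespace LinearPMap

section Kernel

variable {R E F : Type*} [Ring R] [AddCommGroup E] [Module R E] [AddCommGroup F] [Module R F]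

def ker (f : E →ₗ.[R] F) : Submodule R E :=
  (LinearMap.ker f.toFun).map f.domain.subtype

theorem mem_ker {f : E →ₗ.[R] F} {x : E} : x ∈ f.ker ↔ ∃ hx : x ∈ f.domain, f ⟨x, hx⟩ = 0 := by
  simp [ker]

noncomputable def kerToFunEquivKer (f : E →ₗ.[R] F) : LinearMap.ker f.toFun ≃ₗ[R] f.ker :=
  Submodule.equivMapOfInjective _ f.domain.injective_subtype _

end Kernel

theorem IsClosed.isClosed_ker {R E F : Type*} [CommRing R] [AddCommGroup E] [Module R E]
    [AddCommGroup F] [Module R F] [TopologicalSpace E] [TopologicalSpace F] {f : E →ₗ.[R] F}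
    (hf : f.IsClosed) : _root_.IsClosed (f.ker : Set E) := by
  have : (f.ker : Set E) = (fun x => (x, (0 : F))) ⁻¹' f.graph := by
    ext x
    simp [mem_ker, mem_graph_iff]
  rw [this]
  exact hf.preimage (continuous_id.prodMk continuous_const)

theorem exists_preimage_norm_le_of_isClosed_range {𝕜 E F : Type*} [NontriviallyNormedField 𝕜]
    [NormedAddCommGroup E] [NormedSpace 𝕜 E] [CompleteSpace E]
    [NormedAddCommGroup F] [NormedSpace 𝕜 F] [CompleteSpace F] {f : E →ₗ.[𝕜] F}
    (hf : f.IsClosed) (hrange : _root_.IsClosed (LinearMap.range f.toFun : Set F)) :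
    ∃ C > 0, ∀ x : f.domain, ∃ x' : f.domain, f x' = f x ∧ ‖(x' : E)‖ ≤ C * ‖f x‖ := by
  have := hf.completeSpace_coe
  have := hrange.completeSpace_coe
  let π : f.graph →L[𝕜] LinearMap.range f.toFun :=
    ((ContinuousLinearMap.snd 𝕜 E F).comp f.graph.subtypeL).codRestrict _ fun g => by
      obtain ⟨x, -, hx⟩ := f.mem_graph_iff.1 g.2
      exact ⟨x, hx⟩
  have hπ : Function.Surjective π := by
    rintro ⟨_, x, rfl⟩
    exact ⟨⟨_, f.mem_graph x⟩, rfl⟩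
  obtain ⟨C, hC, hpre⟩ := π.exists_preimage_norm_le hπ
  refine ⟨C, hC, fun x => ?_⟩
  obtain ⟨⟨g, hg⟩, hgx, hgC⟩ := hpre ⟨f x, x, rfl⟩
  obtain ⟨x', hx'g, hx'⟩ := f.mem_graph_iff.1 hg
  refine ⟨x', hx'.trans (congrArg Subtype.val hgx), ?_⟩
  calc ‖(x' : E)‖ = ‖g.1‖ := by rw [hx'g]
    _ ≤ ‖g‖ := norm_fst_le g
    _ ≤ C * ‖f x‖ := hgC

variable {𝕜 E F : Type*} [RCLike 𝕜] [NormedAddCommGroup E] [InnerProductSpace 𝕜 E]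
  [NormedAddCommGroup F] [InnerProductSpace 𝕜 F]

theorem ker_adjoint [CompleteSpace E] {T : E →ₗ.[𝕜] F} (hT : Dense (T.domain : Set E)) :
    T†.ker = (LinearMap.range T.toFun)ᗮ := by
  ext y
  rw [mem_ker, Submodule.mem_orthogonal']
  constructor
  · rintro ⟨hy, hTy⟩ _ ⟨x, rfl⟩
    change ⟪y, T x⟫_𝕜 = 0
    rw [← adjoint_isFormalAdjoint hT ⟨y, hy⟩ x, hTy, inner_zero_left]
  · intro hy
    have hzero : ∀ x : T.domain, ⟪(0 : E), (x : E)⟫_𝕜 = ⟪y, T x⟫_𝕜 := fun x => by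
      rw [inner_zero_left]
      exact (hy _ (LinearMap.mem_range_self _ x)).symm
    have hmem := mem_adjoint_domain_of_exists y ⟨0, hzero⟩
    exact ⟨hmem, adjoint_apply_eq hT ⟨y, hmem⟩ hzero⟩

theorem orthogonal_ker_le_range_adjoint [CompleteSpace E] [CompleteSpace F] {T : E →ₗ.[𝕜] F}
    (hT : Dense (T.domain : Set E)) (hclosed : T.IsClosed)
    (hrange : _root_.IsClosed (LinearMap.range T.toFun : Set F)) :
    T.kerᗮ ≤ LinearMap.range T†.toFun := by
  -- `T x ↦ ⟪y, x⟫` is well defined on `range T` as `y ⊥ ker T`, and bounded by the open mapping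
  -- theorem; its Riesz representative `z` satisfies `T† z = y`.
  intro y hy
  obtain ⟨C, -, hC⟩ := exists_preimage_norm_le_of_isClosed_range hclosed hrange
  have hker : LinearMap.ker T.toFun ≤ LinearMap.ker ((innerₛₗ 𝕜 y).comp T.domain.subtype) :=
    fun x hx => Submodule.inner_left_of_mem_orthogonal (Submodule.mem_map_of_mem hx) hy
  obtain ⟨ℓ, hℓ⟩ := LinearMap.exists_comp_rangeRestrict_eq hker
  have hℓ' : ∀ x : T.domain, ℓ ⟨T x, LinearMap.mem_range_self _ x⟩ = ⟪y, (x : E)⟫_𝕜 := hℓ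
  have hbound : ∀ r, ‖ℓ r‖ ≤ (‖y‖ * C) * ‖r‖ := by
    rintro ⟨_, x, rfl⟩
    obtain ⟨x', hx'x, hx'C⟩ := hC x
    have hℓx : ℓ ⟨T x, LinearMap.mem_range_self _ x⟩ = ⟪y, (x' : E)⟫_𝕜 := by
      rw [← hℓ' x']
      exact congrArg ℓ (Subtype.ext hx'x.symm)
    calc ‖ℓ ⟨T x, LinearMap.mem_range_self _ x⟩‖ = ‖⟪y, (x' : E)⟫_𝕜‖ := by rw [hℓx]
      _ ≤ ‖y‖ * ‖(x' : E)‖ := norm_inner_le_norm _ _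
      _ ≤ ‖y‖ * (C * ‖T x‖) := by gcongr
      _ = ‖y‖ * C * ‖T x‖ := by ring
  have := hrange.completeSpace_coe
  let z := (InnerProductSpace.toDual 𝕜 _).symm (ℓ.mkContinuous _ hbound)
  have hz : ∀ x : T.domain, ⟪y, (x : E)⟫_𝕜 = ⟪(z : F), T x⟫_𝕜 := fun x => by
    rw [← hℓ' x, ← ℓ.mkContinuous_apply _ hbound, ← InnerProductSpace.toDual_symm_apply]
    rfl
  have hzdom := mem_adjoint_domain_of_exists (z : F) ⟨y, hz⟩
  exact ⟨⟨z, hzdom⟩, adjoint_apply_eq hT _ hz⟩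

theorem range_le_range_add_of_orthogonal_ker_le {f g : E →ₗ.[𝕜] F} [f.ker.HasOrthogonalProjection]
    (h : f.kerᗮ ≤ g.ker) : LinearMap.range f.toFun ≤ LinearMap.range (f + g).toFun := by
  rintro _ ⟨x, rfl⟩
  obtain ⟨hpx, hfpx⟩ := mem_ker.1 (f.ker.starProjection_apply_mem x)
  obtain ⟨hg, hgx⟩ := mem_ker.1 (h (f.ker.sub_starProjection_mem_orthogonal x))
  have hf : (x : E) - f.ker.starProjection x ∈ f.domain := f.domain.sub_mem x.2 hpx
  refine ⟨⟨_, hf, hg⟩, ?_⟩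
  change f ⟨_, hf⟩ + g ⟨_, hg⟩ = f x
  rw [hgx, add_zero, show (⟨_, hf⟩ : f.domain) = x - ⟨_, hpx⟩ from rfl, map_sub, hfpx, sub_zero]

variable [CompleteSpace E] {d : E →ₗ.[𝕜] E}

theorem ker_add_adjoint (hd : Dense (d.domain : Set E)) (hdd : LinearMap.range d.toFun ≤ d.ker) :
    (d + d†).ker = d.ker ⊓ d†.ker := by
  ext x
  constructor
  · rintro ⟨⟨_, h₁, h₂⟩, hD, rfl⟩
    replace hD : d ⟨_, h₁⟩ + d† ⟨_, h₂⟩ = 0 := hD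
    obtain ⟨hdx, hddx⟩ := mem_ker.1 (hdd (LinearMap.mem_range_self d.toFun ⟨_, h₁⟩))
    have hortho : ⟪d† ⟨_, h₂⟩, d ⟨_, h₁⟩⟫_𝕜 = 0 := by
      have := adjoint_isFormalAdjoint hd ⟨_, h₂⟩ ⟨_, hdx⟩
      rwa [hddx, inner_zero_right] at this
    rw [eq_neg_of_add_eq_zero_right hD, inner_neg_left, neg_eq_zero, inner_self_eq_zero] at hortho
    rw [hortho, zero_add] at hD
    exact ⟨mem_ker.2 ⟨h₁, hortho⟩, mem_ker.2 ⟨h₂, hD⟩⟩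
  · rintro ⟨hx₁, hx₂⟩
    obtain ⟨h₁, e₁⟩ := mem_ker.1 hx₁
    obtain ⟨h₂, e₂⟩ := mem_ker.1 hx₂
    refine mem_ker.2 ⟨⟨h₁, h₂⟩, ?_⟩
    change d ⟨x, h₁⟩ + d† ⟨x, h₂⟩ = 0
    rw [e₁, e₂, add_zero]

theorem range_add_adjoint_le (hd : Dense (d.domain : Set E)) :
    LinearMap.range (d + d†).toFun ≤ (d.ker ⊓ d†.ker)ᗮ := by
  rintro _ ⟨⟨x, h₁, h₂⟩, rfl⟩ u ⟨hu₁, hu₂⟩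
  obtain ⟨hu₁, e₁⟩ := mem_ker.1 hu₁
  obtain ⟨hu₂, e₂⟩ := mem_ker.1 hu₂
  change ⟪u, d ⟨x, h₁⟩ + d† ⟨x, h₂⟩⟫_𝕜 = 0
  have hdx : ⟪u, d ⟨x, h₁⟩⟫_𝕜 = 0 := by
    rw [← adjoint_isFormalAdjoint hd ⟨u, hu₂⟩ ⟨x, h₁⟩, e₂, inner_zero_left]
  have hd'x : ⟪d† ⟨x, h₂⟩, u⟫_𝕜 = 0 := by
    rw [adjoint_isFormalAdjoint hd ⟨x, h₂⟩ ⟨u, hu₁⟩, e₁, inner_zero_right]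
  rw [inner_add_right, hdx, inner_eq_zero_symm.1 hd'x, add_zero]

theorem range_add_adjoint (hd : Dense (d.domain : Set E)) (hclosed : d.IsClosed)
    (hrange : _root_.IsClosed (LinearMap.range d.toFun : Set E))
    (hdd : LinearMap.range d.toFun ≤ d.ker) :
    LinearMap.range (d + d†).toFun = (d.ker ⊓ d†.ker)ᗮ := by
  have := hclosed.isClosed_ker.completeSpace_coe
  have := hrange.completeSpace_coe
  have hkeradj := ker_adjoint hd
  have := (adjoint_isClosed hd).isClosed_ker.completeSpace_coe
  have hd₁ : LinearMap.range d.toFun ≤ LinearMap.range (d + d†).toFun :=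
    range_le_range_add_of_orthogonal_ker_le (hkeradj ▸ Submodule.orthogonal_le hdd)
  have hd₂ : LinearMap.range d†.toFun ≤ LinearMap.range (d + d†).toFun := by
    rw [add_comm]
    refine range_le_range_add_of_orthogonal_ker_le ?_
    rw [hkeradj, Submodule.orthogonal_orthogonal]
    exact hdd
  refine le_antisymm (range_add_adjoint_le hd) fun y hy => ?_
  have hperp := d.ker.sub_starProjection_mem_orthogonal y
  have hproj : d.ker.starProjection y ∈ LinearMap.range d.toFun := by
    rw [← Submodule.inf_orthogonal_inf_orthogonal_of_le hdd, ← hkeradj]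
    refine ⟨d.ker.starProjection_apply_mem y, ?_⟩
    simpa using Submodule.sub_mem _ hy (Submodule.orthogonal_le inf_le_left hperp)
  rw [← add_sub_cancel (d.ker.starProjection y) y]
  exact Submodule.add_mem _ (hd₁ hproj)
    (hd₂ (orthogonal_ker_le_range_adjoint hd hclosed hrange hperp))

end LinearPMap

/-- Let `d` be a closed densely defined operator on a Hilbert space `H` with
`d² = 0` (range ⊆ kernel), closed range, and finite-dimensional cohomology `ker d / range d`.
Then `D = d + d*` (with domain `D(d) ∩ D(d*)`) has finite-dimensional kernel
`ker d ∩ ker d*` isomorphic to `ker d / range d`, and `D` is Fredholm as an unbounded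
operator: it has closed range, finite-dimensional kernel, and finite-dimensional cokernel. -/
theorem stmt11 {H : Type*} [NormedAddCommGroup H] [InnerProductSpace ℝ H] [CompleteSpace H]
    (d : H →ₗ.[ℝ] H) (hclosed : d.IsClosed) (hdense : Dense (d.domain : Set H))
    (K : Submodule ℝ H) (hK : K = (LinearMap.ker d.toFun).map d.domain.subtype)
    (Kadj : Submodule ℝ H)
    (hKadj : Kadj = (LinearMap.ker d.adjoint.toFun).map d.adjoint.domain.subtype)
    (R : Submodule ℝ H) (hR : R = LinearMap.range d.toFun)
    -- d² = 0 : range d ⊆ ker d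
    (hdd : R ≤ K)
    -- range d is closed, cohomology ker d / range d is finite dimensional
    (hRclosed : IsClosed (R : Set H))
    (hfin : FiniteDimensional ℝ (K ⧸ R.comap K.subtype))
    -- D = d + d*, whose domain is D(d) ∩ D(d*)
    (D : H →ₗ.[ℝ] H) (hD : D = d + d.adjoint) :
    (FiniteDimensional ℝ (K ⊓ Kadj : Submodule ℝ H) ∧
      Nonempty ((K ⊓ Kadj : Submodule ℝ H) ≃ₗ[ℝ] (K ⧸ R.comap K.subtype))) ∧
    ((LinearMap.ker D.toFun).map D.domain.subtype = K ⊓ Kadj) ∧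
    -- D is Fredholm
    (IsClosed ((LinearMap.range D.toFun : Submodule ℝ H) : Set H) ∧
      FiniteDimensional ℝ (LinearMap.ker D.toFun) ∧
      FiniteDimensional ℝ (H ⧸ LinearMap.range D.toFun)) := by
  obtain rfl : K = d.ker := hK
  obtain rfl : Kadj = d†.ker := hKadj
  subst hR hD
  have := hRclosed.completeSpace_coe
  let harmonic : ↥(d.ker ⊓ d†.ker) ≃ₗ[ℝ] d.ker ⧸ (LinearMap.range d.toFun).comap d.ker.subtype :=
    (LinearEquiv.ofEq _ _ (by rw [ker_adjoint hdense])).trans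
      (Submodule.infOrthogonalEquivQuotient hdd)
  have hharmonic : FiniteDimensional ℝ ↥(d.ker ⊓ d†.ker) := harmonic.symm.finiteDimensional
  have hker := ker_add_adjoint hdense hdd
  have hrange := range_add_adjoint hdense hclosed hRclosed hdd
  refine ⟨⟨hharmonic, ⟨harmonic⟩⟩, hker, ?_, ?_, ?_⟩
  · rw [hrange]
    exact Submodule.isClosed_orthogonal _
  · exact ((d + d†).kerToFunEquivKer.trans (LinearEquiv.ofEq _ _ hker)).symm.finiteDimensional
  · rw [hrange]
    exact (Submodule.quotientEquivOfIsCompl _ _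
      (Submodule.isCompl_orthogonal (d.ker ⊓ d†.ker)).symm).symm.finiteDimensional
end
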